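/- The operator L has no strictly positive eigenvalues: for every λ > 0, the only twice continuously differentiable function ψ ∈ L²(ℝ) satisfying −ψ'' + V·ψ = λ·ψ on ℝ is ψ ≡ 0. -/

import Mathlib

open Real MeasureTheory Filter

noncomputable def Qs (x : ℝ) : ℝ := (3/2) * (1 / Real.cosh (x/2))^2
noncomputable def Hs (x : ℝ) : ℝ := Real.tanh (x/2)
noncomputable def alphaFn (x : ℝ) : ℝ := (1/3) * (Real.sinh x + x)
noncomputable def alphaInv : ℝ → ℝ := Function.invFun alphaFn
noncomputable def Qt (x : ℝ) : ℝ := Qs (alphaInv x)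
noncomputable def Ht (x : ℝ) : ℝ := Hs (alphaInv x)
noncomputable def Vpot (x : ℝ) : ℝ := 2 * (Qt x)^2 * (1 - Qt x)

/-!
Since `sinh y + y = 3x` forces `2 cosh y ≥ 3|x|`, the potential satisfies `|V x| ≤ 18 / (1 + x²)`.
For a solution of `ψ'' = (V - λ) ψ` with `λ = s² > 0`, the energy `W = ψ'² + λψ²` has
`|W'| = |2Vψψ'| ≤ (|V| / s) W`, and `|V|` has a bounded primitive (an `arctan`), so a Grönwall
argument bounds `W` from below everywhere by a fixed positive multiple of `W x₀`. On the other hand,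
`ψ² ∈ L¹` gives points `a` near `-∞` and `b` near `+∞` with `ψψ'(a) ≥ 0 ≥ ψψ'(b)`, and integrating
`(ψψ')' = ψ'² + (V - λ)ψ²` over `[a, b]` bounds `∫ₐᵇ W` by a multiple of `‖ψ‖₂²` independent of
`b - a`. Hence `W x₀ = 0`.
-/

lemma alphaFn_surjective : Function.Surjective alphaFn := by
  have hcont : Continuous alphaFn := by unfold alphaFn; fun_prop
  refine hcont.surjective ?_ ?_
  · refine tendsto_atTop_mono' _ ?_ (tendsto_id.const_mul_atTop (by norm_num : (0 : ℝ) < 2 / 3))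
    filter_upwards [eventually_ge_atTop 0] with x hx
    have := self_le_sinh_iff.mpr hx
    simp only [alphaFn, id]; linarith
  · refine tendsto_atBot_mono' _ ?_ (tendsto_id.const_mul_atBot (by norm_num : (0 : ℝ) < 2 / 3))
    filter_upwards [eventually_le_atBot 0] with x hx
    have := sinh_le_self_iff.mpr hx
    simp only [alphaFn, id]; linarith

lemma alphaFn_alphaInv (x : ℝ) : alphaFn (alphaInv x) = x :=
  Function.rightInverse_invFun alphaFn_surjective x

lemma three_mul_abs_le_two_mul_cosh_alphaInv (x : ℝ) : 3 * |x| ≤ 2 * cosh (alphaInv x) := by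
  set y := alphaInv x
  have hxy : 3 * x = sinh y + y := by
    have := alphaFn_alphaInv x
    simp only [alphaFn] at this; linarith
  have hy : |y| ≤ |sinh y| := by rw [abs_sinh]; exact self_le_sinh_iff.mpr (abs_nonneg y)
  have hsinh : |sinh y| ≤ cosh y := by rw [abs_sinh, ← cosh_abs]; exact (sinh_lt_cosh _).le
  have : |3 * x| ≤ |sinh y| + |y| := hxy ▸ abs_add_le _ _
  rw [abs_mul, abs_of_pos three_pos] at this
  linarith

lemma Qt_eq (x : ℝ) : Qt x = 3 / (1 + cosh (alphaInv x)) := by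
  have h : 1 + cosh (alphaInv x) = 2 * cosh (alphaInv x / 2) ^ 2 := by
    conv_lhs => rw [← mul_div_cancel₀ (alphaInv x) two_ne_zero, cosh_two_mul]
    linarith [cosh_sq (alphaInv x / 2)]
  rw [Qt, Qs, h]
  field_simp

lemma Qt_pos (x : ℝ) : 0 < Qt x := by
  rw [Qt_eq]; positivity

lemma Qt_le_three_halves (x : ℝ) : Qt x ≤ 3 / 2 := by
  rw [Qt_eq, div_le_iff₀ (by positivity)]
  linarith [one_le_cosh (alphaInv x)]

lemma Qt_le (x : ℝ) : Qt x ≤ 6 / (2 + 3 * |x|) := by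
  rw [Qt_eq, div_le_div_iff₀ (by positivity) (by positivity)]
  linarith [three_mul_abs_le_two_mul_cosh_alphaInv x]

lemma abs_Vpot_le (x : ℝ) : |Vpot x| ≤ 18 / (1 + x ^ 2) := by
  have hQ := Qt_pos x
  have hQ' := Qt_le_three_halves x
  have h1 : |Vpot x| ≤ 2 * Qt x ^ 2 := by
    rw [Vpot, abs_le]; constructor <;> nlinarith [sq_nonneg (Qt x)]
  have h2 : Qt x ^ 2 ≤ (6 / (2 + 3 * |x|)) ^ 2 := pow_le_pow_left₀ hQ.le (Qt_le x) 2
  have h3 : 2 * (6 / (2 + 3 * |x|)) ^ 2 ≤ 18 / (1 + x ^ 2) := by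
    rw [div_pow, ← mul_div_assoc, div_le_div_iff₀ (by positivity) (by positivity)]
    nlinarith [sq_abs x, abs_nonneg x]
  linarith

theorem mul_exp_neg_le_of_abs_deriv_le {W W' G g : ℝ → ℝ} {B : ℝ}
    (hW : ∀ x, HasDerivAt W (W' x) x) (hG : ∀ x, HasDerivAt G (g x) x)
    (hGB : ∀ x, |G x| ≤ B) (hW' : ∀ x, |W' x| ≤ g x * W x) {y : ℝ} (hy : 0 ≤ W y) (x : ℝ) :
    W y * exp (-(2 * B)) ≤ W x := by
  have hmono : Monotone fun x => W x * exp (G x) :=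
    monotone_of_hasDerivAt_nonneg (fun x => (hW x).mul (hG x).exp) fun x => by
      have := mul_nonneg (neg_le_iff_add_nonneg.1 (abs_le.1 (hW' x)).1) (exp_pos (G x)).le
      simp only [Pi.zero_apply]; linarith
  have hanti : Antitone fun x => W x * exp (-G x) :=
    antitone_of_hasDerivAt_nonpos (fun x => (hW x).mul (hG x).neg.exp) fun x => by
      have := mul_nonneg (sub_nonneg.2 (abs_le.1 (hW' x)).2) (exp_pos (-G x)).le
      simp only [Pi.zero_apply, Pi.neg_apply]; linarith
  have hB : ∀ u v, exp (-(2 * B)) ≤ exp (G u - G v) := fun u v =>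
    exp_le_exp.2 (by linarith [abs_le.1 (hGB u), abs_le.1 (hGB v)])
  rcases le_total y x with h | h
  · calc W y * exp (-(2 * B)) ≤ W y * exp (G y - G x) := mul_le_mul_of_nonneg_left (hB y x) hy
      _ = W y * exp (G y) * exp (-G x) := by rw [sub_eq_add_neg, exp_add, mul_assoc]
      _ ≤ W x * exp (G x) * exp (-G x) := mul_le_mul_of_nonneg_right (hmono h) (exp_pos _).le
      _ = W x := by rw [mul_assoc, ← exp_add, add_neg_cancel, exp_zero, mul_one]
  · calc W y * exp (-(2 * B)) ≤ W y * exp (G x - G y) := mul_le_mul_of_nonneg_left (hB x y) hy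
      _ = W y * exp (-G y) * exp (G x) := by rw [sub_eq_neg_add, exp_add, mul_assoc]
      _ ≤ W x * exp (-G x) * exp (G x) := mul_le_mul_of_nonneg_right (hanti h) (exp_pos _).le
      _ = W x := by rw [mul_assoc, ← exp_add, neg_add_cancel, exp_zero, mul_one]

theorem frequently_atTop_mul_deriv_nonpos {f f' : ℝ → ℝ} (hf : ∀ x, HasDerivAt f (f' x) x)
    (hint : Integrable fun x => f x ^ 2) : ∃ᶠ x in atTop, f x * f' x ≤ 0 := by
  intro h
  obtain ⟨c, hc⟩ := eventually_atTop.1 h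
  have hpos : ∀ x ≥ c, 0 < f x * f' x := fun x hx => not_le.1 (hc x hx)
  have hmono : MonotoneOn (fun x => f x ^ 2) (Set.Ici c) :=
    monotoneOn_of_hasDerivWithinAt_nonneg (convex_Ici c)
      (fun x _ => ((hf x).continuousAt.pow 2).continuousWithinAt)
      (fun x _ => ((hf x).pow 2).hasDerivWithinAt)
      (fun x hx => by
        have := hpos x (interior_subset hx)
        norm_num; linarith)
  have hfc : 0 < f c ^ 2 := by
    have := hpos c le_rfl
    positivity [left_ne_zero_of_mul this.ne']
  refine (hint.measure_ge_lt_top hfc).ne (top_le_iff.1 ?_)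
  rw [← Real.volume_Ici (a := c)]
  exact measure_mono fun x hx => hmono Set.self_mem_Ici hx hx

theorem frequently_atBot_mul_deriv_nonneg {f f' : ℝ → ℝ} (hf : ∀ x, HasDerivAt f (f' x) x)
    (hint : Integrable fun x => f x ^ 2) : ∃ᶠ x in atBot, 0 ≤ f x * f' x := by
  have hneg : ∀ x, HasDerivAt (fun x => f (-x)) (-f' (-x)) x := fun x => by
    simpa [Function.comp_def] using (hf (-x)).comp x (hasDerivAt_neg x)
  refine tendsto_neg_atTop_atBot.frequently
    ((frequently_atTop_mul_deriv_nonpos hneg hint.comp_neg).mono fun x hx => ?_)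
  linarith

theorem integral_energy_le {ψ ψ' ψ'' : ℝ → ℝ} {lam M a b : ℝ} (hab : a ≤ b)
    (hψ : ∀ x, HasDerivAt ψ (ψ' x) x) (hψ' : ∀ x, HasDerivAt ψ' (ψ'' x) x)
    (hψ'' : Continuous ψ'') (hM : ∀ x, -(ψ x * ψ'' x) ≤ M * ψ x ^ 2) :
    ∫ x in a..b, (ψ' x ^ 2 + lam * ψ x ^ 2) ≤
      ψ b * ψ' b - ψ a * ψ' a + (lam + M) * ∫ x in a..b, ψ x ^ 2 := by
  have hc : Continuous ψ := continuous_iff_continuousAt.2 fun x => (hψ x).continuousAt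
  have hc' : Continuous ψ' := continuous_iff_continuousAt.2 fun x => (hψ' x).continuousAt
  have hint : ∀ {f : ℝ → ℝ}, Continuous f → IntervalIntegrable f volume a b :=
    fun hf => hf.intervalIntegrable a b
  have hftc : ∫ x in a..b, (ψ' x ^ 2 + ψ x * ψ'' x) = ψ b * ψ' b - ψ a * ψ' a :=
    intervalIntegral.integral_eq_sub_of_hasDerivAt
      (fun x _ => ((hψ x).mul (hψ' x)).congr_deriv (by ring)) (hint (by fun_prop))
  rw [← hftc, ← intervalIntegral.integral_const_mul,
    ← intervalIntegral.integral_add (hint (by fun_prop)) (hint (by fun_prop))]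
  refine intervalIntegral.integral_mono_on hab (hint (by fun_prop)) (hint (by fun_prop))
    fun x _ => ?_
  linarith [hM x]

theorem exists_pos_mul_energy_le {V ψ ψ' ψ'' : ℝ → ℝ} {lam c : ℝ} (hlam : 0 < lam)
    (hψ : ∀ x, HasDerivAt ψ (ψ' x) x) (hψ' : ∀ x, HasDerivAt ψ' (ψ'' x) x)
    (hV : ∀ x, |V x| ≤ c / (1 + x ^ 2)) (heq : ∀ x, ψ'' x = (V x - lam) * ψ x) :
    ∃ κ > 0, ∀ x y, κ * (ψ' y ^ 2 + lam * ψ y ^ 2) ≤ ψ' x ^ 2 + lam * ψ x ^ 2 := by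
  set s := √lam
  have hs : 0 < s := sqrt_pos.2 hlam
  have hss : s ^ 2 = lam := sq_sqrt hlam.le
  refine ⟨exp (-(2 * (|c / s| * (π / 2)))), exp_pos _, fun x y => ?_⟩
  rw [mul_comm]
  refine mul_exp_neg_le_of_abs_deriv_le (W := fun x => ψ' x ^ 2 + lam * ψ x ^ 2)
    (W' := fun x => 2 * V x * ψ x * ψ' x) (G := fun x => c / s * arctan x)
    (fun x => ?_) (fun x => (hasDerivAt_arctan x).const_mul _) (fun x => ?_) (fun x => ?_)
    (by positivity) x
  · refine (((hψ' x).pow 2).add (((hψ x).pow 2).const_mul lam)).congr_deriv ?_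
    rw [heq]; ring
  · rw [abs_mul]
    gcongr
    exact abs_le.2 ⟨(neg_pi_div_two_lt_arctan x).le, (arctan_lt_pi_div_two x).le⟩
  · have hamgm : 2 * |ψ x * ψ' x| * s ≤ ψ' x ^ 2 + lam * ψ x ^ 2 := by
      rw [abs_mul, ← hss]
      nlinarith [sq_nonneg (|ψ' x| - s * |ψ x|), sq_abs (ψ x), sq_abs (ψ' x)]
    calc |2 * V x * ψ x * ψ' x| = |V x| * (2 * |ψ x * ψ' x|) := by
          rw [mul_assoc, mul_assoc, abs_mul, abs_mul, abs_two]; ring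
      _ ≤ c / (1 + x ^ 2) * ((ψ' x ^ 2 + lam * ψ x ^ 2) / s) := by
          refine mul_le_mul (hV x) ?_ (by positivity) ((abs_nonneg _).trans (hV x))
          rwa [le_div_iff₀ hs]
      _ = c / s * (1 / (1 + x ^ 2)) * (ψ' x ^ 2 + lam * ψ x ^ 2) := by ring

theorem exists_le_sub_integral_energy_le {V ψ ψ' ψ'' : ℝ → ℝ} {lam c T : ℝ} (hlam : 0 < lam)
    (hψ : ∀ x, HasDerivAt ψ (ψ' x) x) (hψ' : ∀ x, HasDerivAt ψ' (ψ'' x) x)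
    (hψ'' : Continuous ψ'') (hint : Integrable fun x => ψ x ^ 2)
    (hV : ∀ x, |V x| ≤ c / (1 + x ^ 2)) (heq : ∀ x, ψ'' x = (V x - lam) * ψ x) :
    ∃ a b, a ≤ b ∧ T ≤ b - a ∧
      ∫ x in a..b, (ψ' x ^ 2 + lam * ψ x ^ 2) ≤ (2 * lam + c) * ∫ x, ψ x ^ 2 := by
  have hc : 0 ≤ c := (abs_nonneg _).trans ((hV 0).trans_eq (by simp))
  obtain ⟨a, ha⟩ := (frequently_atBot_mul_deriv_nonneg hψ hint).exists
  obtain ⟨b, hb, hab, hT⟩ := ((frequently_atTop_mul_deriv_nonpos hψ hint).and_eventually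
    ((eventually_ge_atTop a).and (eventually_ge_atTop (a + T)))).exists
  refine ⟨a, b, hab, by linarith, ?_⟩
  have hM : ∀ x, -(ψ x * ψ'' x) ≤ (lam + c) * ψ x ^ 2 := fun x => by
    have : -V x ≤ c := (neg_le_abs _).trans ((hV x).trans (div_le_self hc (by nlinarith)))
    rw [heq]; nlinarith [sq_nonneg (ψ x)]
  have hL2 : ∫ x in a..b, ψ x ^ 2 ≤ ∫ x, ψ x ^ 2 := by
    rw [intervalIntegral.integral_of_le hab]
    exact setIntegral_le_integral hint (Eventually.of_forall fun x => sq_nonneg _)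
  have := integral_energy_le (lam := lam) hab hψ hψ' hψ'' hM
  nlinarith [mul_le_mul_of_nonneg_left hL2 (by linarith : 0 ≤ 2 * lam + c)]

theorem eigenfunction_eq_zero_of_abs_potential_le {V ψ : ℝ → ℝ} {lam c : ℝ} (hlam : 0 < lam)
    (hψ : ContDiff ℝ 2 ψ) (hint : Integrable fun x => ψ x ^ 2)
    (hV : ∀ x, |V x| ≤ c / (1 + x ^ 2))
    (heq : ∀ x, deriv (deriv ψ) x = (V x - lam) * ψ x) (x₀ : ℝ) : ψ x₀ = 0 := by
  have hψ1 : ∀ x, HasDerivAt ψ (deriv ψ x) x :=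
    fun x => (hψ.differentiable (by norm_num) x).hasDerivAt
  have hψ2 : ContDiff ℝ 1 (deriv ψ) := hψ.deriv'
  have hψ2' : ∀ x, HasDerivAt (deriv ψ) (deriv (deriv ψ) x) x :=
    fun x => (hψ2.differentiable one_ne_zero x).hasDerivAt
  obtain ⟨κ, hκ, hlow⟩ := exists_pos_mul_energy_le hlam hψ1 hψ2' hV heq
  set ε := κ * (deriv ψ x₀ ^ 2 + lam * ψ x₀ ^ 2)
  by_contra hne
  have hε : 0 < ε := by positivity
  set K := (2 * lam + c) * ∫ x, ψ x ^ 2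
  obtain ⟨a, b, hab, hlen, hupper⟩ := exists_le_sub_integral_energy_le (T := K / ε + 1) hlam
    hψ1 hψ2' (hψ2.continuous_deriv le_rfl) hint hV heq
  have hlower : ε * (b - a) ≤ ∫ x in a..b, (deriv ψ x ^ 2 + lam * ψ x ^ 2) := by
    have := intervalIntegral.integral_mono_on hab (intervalIntegrable_const (μ := volume))
      ((by fun_prop : Continuous fun x => deriv ψ x ^ 2 + lam * ψ x ^ 2).intervalIntegrable a b)
      fun x _ => hlow x x₀
    rwa [intervalIntegral.integral_const, smul_eq_mul, mul_comm] at this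
  have hlong : K + ε ≤ ε * (b - a) := by
    have := mul_le_mul_of_nonneg_left hlen hε.le
    rwa [mul_add, mul_div_cancel₀ _ hε.ne', mul_one] at this
  linarith

/-- The operator `L = -∂ₓ² + V` has no strictly positive eigenvalues. -/
theorem L_no_positive_eigenvalues :
    ∀ lam : ℝ, 0 < lam → ∀ ψ : ℝ → ℝ, ContDiff ℝ 2 ψ →
      Integrable (fun x => (ψ x)^2) →
      (∀ x : ℝ, -(deriv (deriv ψ) x) + Vpot x * ψ x = lam * ψ x) →
      ∀ x : ℝ, ψ x = 0 := by
  intro lam hlam ψ hψ hint heq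
  exact eigenfunction_eq_zero_of_abs_potential_le hlam hψ hint abs_Vpot_le
    fun x => by linear_combination -heq x
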